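/- The fractal-based belief entropy E_FB(m) = -Σ_{∅≠F⊆Θ} m_F(F) log m_F(F) is maximized, over all BPAs m on an n-element frame Θ, uniquely by the vacuous BPA m(Θ) = 1, and the maximum value is log(2^n - 1). -/

import Mathlib

open Finset Real Filter

/-- A basic probability assignment on the power set of a finite frame `Θ`. -/
noncomputable def IsBPA {Θ : Type*} [Fintype Θ] [DecidableEq Θ] (m : Finset Θ → ℝ) : Prop :=
  m ∅ = 0 ∧ (∀ F, 0 ≤ m F) ∧ ∑ F : Finset Θ, m F = 1

/-- The fractal-based basic probability assignment:
`m_F(F) = m(F)/(2^|F|-1) + Σ_{F ⊊ G} m(G)/(2^|G|-1)`. -/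
noncomputable def mF {Θ : Type*} [Fintype Θ] [DecidableEq Θ] (m : Finset Θ → ℝ) (F : Finset Θ) : ℝ :=
  m F / ((2 : ℝ) ^ F.card - 1) +
    ∑ G ∈ Finset.univ.filter (fun G : Finset Θ => F ⊂ G), m G / ((2 : ℝ) ^ G.card - 1)

/-- Fractal-based belief entropy: Shannon entropy of `m_F` over nonempty subsets. -/
noncomputable def EFB {Θ : Type*} [Fintype Θ] [DecidableEq Θ] (m : Finset Θ → ℝ) : ℝ :=
  ∑ F ∈ Finset.univ.filter (fun F : Finset Θ => F.Nonempty), Real.negMulLog (mF m F)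

/-- Pignistic probability transformation: `BetP(θ) = Σ_{θ ∈ F} m(F)/|F|`. -/
noncomputable def BetP {Θ : Type*} [Fintype Θ] [DecidableEq Θ] (m : Finset Θ → ℝ) (θ : Θ) : ℝ :=
  ∑ F ∈ Finset.univ.filter (fun F : Finset Θ => θ ∈ F), m F / (F.card : ℝ)

/-- Plausibility of a singleton: `Pl(θ) = Σ_{θ ∈ F} m(F)`. -/
noncomputable def Pl {Θ : Type*} [Fintype Θ] [DecidableEq Θ] (m : Finset Θ → ℝ) (θ : Θ) : ℝ :=
  ∑ F ∈ Finset.univ.filter (fun F : Finset Θ => θ ∈ F), m F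

/-! `m_F` spreads the mass `m G` of every nonempty `G` evenly over its `2 ^ |G| - 1` nonempty
subsets, so it is a probability distribution on the `2 ^ n - 1` nonempty subsets of `Θ`. By Jensen's
inequality for the strictly concave `negMulLog`, its entropy is at most `log (2 ^ n - 1)`, with
equality iff `m_F` is uniform. Only `Θ` itself receives no share from a larger set, so
`m_F Θ = m Θ / (2 ^ n - 1)` and uniformity forces `m Θ = 1`; conversely, when `m Θ = 1` every
nonempty set receives exactly the share `1 / (2 ^ n - 1)`. -/

lemma Real.negMulLog_inv (x : ℝ) : negMulLog x⁻¹ = x⁻¹ * log x := by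
  simp [negMulLog, log_inv]

section Entropy

variable {ι : Type*} {s : Finset ι} {p : ι → ℝ}

theorem sum_negMulLog_le_log_card (h₀ : ∀ i ∈ s, 0 ≤ p i) (h₁ : ∑ i ∈ s, p i = 1) :
    ∑ i ∈ s, negMulLog (p i) ≤ log #s := by
  have hs : (0 : ℝ) < #s := by simpa using (nonempty_of_sum_ne_zero (h₁ ▸ one_ne_zero)).card_pos
  have jensen := concaveOn_negMulLog.le_map_sum (t := s) (w := fun _ => (#s : ℝ)⁻¹) (p := p)
    (fun _ _ => by positivity) (by simp [hs.ne']) h₀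
  simp only [smul_eq_mul, ← mul_sum, h₁, mul_one, negMulLog_inv] at jensen
  exact le_of_mul_le_mul_left jensen (inv_pos.2 hs)

theorem sum_negMulLog_eq_log_card_iff (h₀ : ∀ i ∈ s, 0 ≤ p i) (h₁ : ∑ i ∈ s, p i = 1) :
    ∑ i ∈ s, negMulLog (p i) = log #s ↔ ∀ i ∈ s, p i = (#s : ℝ)⁻¹ := by
  have hs : (0 : ℝ) < #s := by simpa using (nonempty_of_sum_ne_zero (h₁ ▸ one_ne_zero)).card_pos
  have jensen := strictConcaveOn_negMulLog.map_sum_eq_iff (t := s) (w := fun _ => (#s : ℝ)⁻¹)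
    (p := p) (fun _ _ => by positivity) (by simp [hs.ne']) h₀
  simp only [smul_eq_mul, ← mul_sum, h₁, mul_one, negMulLog_inv] at jensen
  rw [← jensen, eq_comm, mul_right_inj' (inv_ne_zero hs.ne')]

end Entropy

lemma card_filter_nonempty_powerset {α : Type*} [DecidableEq α] (G : Finset α) :
    #(G.powerset.filter Finset.Nonempty) = 2 ^ #G - 1 := by
  rw [← card_powerset, ← card_erase_of_mem (empty_mem_powerset G)]
  congr 1
  ext F
  simp [nonempty_iff_ne_empty, and_comm]

section FractalBPA

variable {Θ : Type*} [Fintype Θ] [DecidableEq Θ] (m : Finset Θ → ℝ)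

lemma mF_eq_sum_superset (F : Finset Θ) :
    mF m F = ∑ G ∈ univ.filter (F ⊆ ·), m G / ((2 : ℝ) ^ #G - 1) := by
  rw [mF, ← sum_insert (f := fun G => m G / ((2 : ℝ) ^ #G - 1)) (by simp)]
  congr 1
  ext G
  simp [subset_iff_ssubset_or_eq, eq_comm, or_comm]

lemma sum_mF_nonempty :
    ∑ F ∈ univ.filter Finset.Nonempty, mF m F = ∑ G ∈ univ.filter Finset.Nonempty, m G := by
  simp_rw [mF_eq_sum_superset]
  rw [sum_comm' (t' := univ.filter Finset.Nonempty)
    (s' := fun G => G.powerset.filter Finset.Nonempty) ?_]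
  · refine sum_congr rfl fun G hG => ?_
    have hpow : 1 < (2 : ℝ) ^ #G := one_lt_pow₀ one_lt_two (card_ne_zero.2 (mem_filter.1 hG).2)
    have hden : (2 : ℝ) ^ #G - 1 ≠ 0 := by linarith
    rw [sum_const, card_filter_nonempty_powerset, nsmul_eq_mul, Nat.cast_sub Nat.one_le_two_pow]
    push_cast
    field_simp
  · intro F G
    simp only [mem_filter, mem_univ, true_and, mem_powerset]
    exact ⟨fun ⟨hF, hFG⟩ => ⟨⟨hFG, hF⟩, hF.mono hFG⟩, fun ⟨⟨hFG, hF⟩, _⟩ => ⟨hF, hFG⟩⟩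

lemma mF_nonneg (hm : ∀ G, 0 ≤ m G) (F : Finset Θ) : 0 ≤ mF m F := by
  rw [mF_eq_sum_superset]
  exact sum_nonneg fun G _ => div_nonneg (hm G) (sub_nonneg.2 (one_le_pow₀ one_le_two))

lemma mF_univ : mF m univ = m univ / ((2 : ℝ) ^ Fintype.card Θ - 1) := by
  rw [mF_eq_sum_superset, sum_eq_single_of_mem univ (by simp) fun G hG hne =>
    absurd (univ_subset_iff.1 (mem_filter.1 hG).2) hne, card_univ]

namespace IsBPA

variable {m}

lemma nonempty_of_ne_zero (hm : IsBPA m) {F : Finset Θ} (hF : m F ≠ 0) : F.Nonempty :=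
  nonempty_iff_ne_empty.2 fun h => hF (h ▸ hm.1)

lemma univ_nonempty (hm : IsBPA m) : (univ : Finset Θ).Nonempty := by
  obtain ⟨F, -, hF⟩ := exists_ne_zero_of_sum_ne_zero (hm.2.2 ▸ one_ne_zero)
  exact (hm.nonempty_of_ne_zero hF).mono (subset_univ F)

lemma sum_mF_nonempty (hm : IsBPA m) : ∑ F ∈ univ.filter Finset.Nonempty, mF m F = 1 := by
  rw [_root_.sum_mF_nonempty, sum_filter_of_ne fun _ _ => hm.nonempty_of_ne_zero, hm.2.2]

lemma eq_zero_of_apply_univ_eq_one (hm : IsBPA m) (h : m univ = 1) {G : Finset Θ}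
    (hG : G ≠ univ) : m G = 0 := by
  have hrest : ∑ G ∈ univ.erase univ, m G = 0 := by
    linarith [add_sum_erase univ m (mem_univ univ), hm.2.2]
  exact (sum_eq_zero_iff_of_nonneg fun G _ => hm.2.1 G).1 hrest G (mem_erase.2 ⟨hG, mem_univ G⟩)

lemma mF_eq_of_apply_univ_eq_one (hm : IsBPA m) (h : m univ = 1) (F : Finset Θ) :
    mF m F = ((2 : ℝ) ^ Fintype.card Θ - 1)⁻¹ := by
  rw [mF_eq_sum_superset, sum_eq_single_of_mem univ (by simp) fun G _ hG => by
    rw [hm.eq_zero_of_apply_univ_eq_one h hG, zero_div], h, card_univ, one_div]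

end IsBPA

end FractalBPA

theorem EFB_max_iff_vacuous_general {Θ : Type*} [Fintype Θ] [DecidableEq Θ]
    (m : Finset Θ → ℝ) (hm : IsBPA m) :
    EFB m ≤ Real.log ((2 : ℝ) ^ Fintype.card Θ - 1) ∧
      (EFB m = Real.log ((2 : ℝ) ^ Fintype.card Θ - 1) ↔ m Finset.univ = 1) := by
  have hcard : (#(univ.filter Finset.Nonempty : Finset (Finset Θ)) : ℝ) =
      2 ^ Fintype.card Θ - 1 := by
    rw [← powerset_univ, card_filter_nonempty_powerset, card_univ,
      Nat.cast_sub Nat.one_le_two_pow]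
    norm_num
  set s : Finset (Finset Θ) := univ.filter Finset.Nonempty
  have h₀ : ∀ F ∈ s, 0 ≤ mF m F := fun F _ => mF_nonneg m hm.2.1 F
  have h₁ : ∑ F ∈ s, mF m F = 1 := hm.sum_mF_nonempty
  have huniv : univ ∈ s := mem_filter.2 ⟨mem_univ _, hm.univ_nonempty⟩
  rw [EFB, ← hcard]
  refine ⟨sum_negMulLog_le_log_card h₀ h₁,
    (sum_negMulLog_eq_log_card_iff h₀ h₁).trans ⟨fun h => ?_, fun h F _ => ?_⟩⟩
  · have hN : (#s : ℝ)⁻¹ ≠ 0 := by simpa using card_ne_zero_of_mem huniv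
    have := h univ huniv
    rwa [mF_univ, ← hcard, div_eq_mul_inv, mul_eq_right₀ hN] at this
  · rw [hcard, hm.mF_eq_of_apply_univ_eq_one h F]

theorem EFB_max_iff_vacuous {Θ : Type*} [Fintype Θ] [DecidableEq Θ] [Nonempty Θ]
    (m : Finset Θ → ℝ) (hm : IsBPA m) :
    EFB m ≤ Real.log ((2 : ℝ) ^ Fintype.card Θ - 1) ∧
      (EFB m = Real.log ((2 : ℝ) ^ Fintype.card Θ - 1) ↔ m Finset.univ = 1) :=
  EFB_max_iff_vacuous_general m hm
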